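/- Let η ∈ (0,1) and κ ∈ (0, 2−2η). Then there exists a constant C > 0 such that for every real Λ ≥ 1 and every ℓ ∈ ℤ², ∑_{u ∈ ℤ², 1+|u|² > Λ²} 1/((1+|u+ℓ|²)(1+|u|²)) ≤ C · Λ^{−2η} · (1+|ℓ|²)^{−(2−2η−κ)/2}. -/
import Mathlib


open scoped ENNReal

/-- Squared Euclidean norm on `ℤ²`. -/
noncomputable def nsq (p : ℤ × ℤ) : ℝ := (p.1 : ℝ) ^ 2 + (p.2 : ℝ) ^ 2

lemma nsq_nonneg (p : ℤ × ℤ) : 0 ≤ nsq p := by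
  unfold nsq; positivity

/-- Antitonicity of `rpow` with negative exponent. -/
lemma rpow_neg_anti {x y p : ℝ} (hx : 0 < x) (hxy : x ≤ y) (hp : 0 ≤ p) :
    y ^ (-p) ≤ x ^ (-p) := by
  rw [Real.rpow_neg hx.le, Real.rpow_neg (hx.le.trans hxy)]
  exact inv_anti₀ (Real.rpow_pos_of_pos hx p) (Real.rpow_le_rpow hx.le hxy hp)

/-- Core estimate with `x` the larger of the two weights. -/
lemma aux_ineq {η κ Λ x y L : ℝ} (hη0 : 0 < η) (hη1 : η < 1)
    (hκ0 : 0 < κ) (hκ2 : κ < 2 - 2 * η) (hΛ : 1 ≤ Λ)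
    (hy1 : 1 ≤ y) (hyx : y ≤ x) (hLx : L / 4 ≤ x) (hL1 : 1 ≤ L)
    (hsh : Λ ^ 2 ≤ x) :
    1 / (x * y) ≤ Λ ^ (-(2 * η)) * (4 * L ^ (-((2 - 2 * η - κ) / 2))) *
      (y ^ (-(1 + κ / 2))) := by
  have hx1 : (1:ℝ) ≤ x := hy1.trans hyx
  have hxpos : (0:ℝ) < x := by linarith
  have hypos : (0:ℝ) < y := by linarith
  have hLpos : (0:ℝ) < L := by linarith
  have hΛpos : (0:ℝ) < Λ := by linarith
  set s : ℝ := (2 - 2 * η - κ) / 2 with hs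
  have hs0 : 0 < s := by simp only [hs]; linarith
  have hs1 : s ≤ 1 := by simp only [hs]; linarith
  have hsplit : x ^ (-s) * (x ^ (-η) * x ^ (-(κ / 2))) = x⁻¹ := by
    rw [← Real.rpow_add hxpos, ← Real.rpow_add hxpos]
    have h : -s + (-η + -(κ / 2)) = -1 := by simp only [hs]; ring
    rw [h, Real.rpow_neg_one]
  have h1 : x ^ (-s) ≤ 4 * L ^ (-s) := by
    have hL4 : (0:ℝ) < L / 4 := by linarith
    have b1 : x ^ (-s) ≤ (L / 4) ^ (-s) := rpow_neg_anti hL4 hLx hs0.le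
    have b2 : (L / 4) ^ (-s) = L ^ (-s) / 4 ^ (-s) :=
      Real.div_rpow hLpos.le (by norm_num) _
    have b3 : (4:ℝ) ^ (-s) = ((4:ℝ) ^ s)⁻¹ := Real.rpow_neg (by norm_num) s
    have b4 : (4:ℝ) ^ s ≤ 4 := by
      calc (4:ℝ) ^ s ≤ (4:ℝ) ^ (1:ℝ) :=
            Real.rpow_le_rpow_of_exponent_le (by norm_num) hs1
        _ = 4 := Real.rpow_one 4
    have b5 : L ^ (-s) / 4 ^ (-s) = L ^ (-s) * 4 ^ s := by
      rw [b3, div_eq_mul_inv, inv_inv]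
    calc x ^ (-s) ≤ L ^ (-s) / 4 ^ (-s) := by rw [← b2]; exact b1
      _ = L ^ (-s) * 4 ^ s := b5
      _ ≤ L ^ (-s) * 4 := mul_le_mul_of_nonneg_left b4 (Real.rpow_nonneg hLpos.le _)
      _ = 4 * L ^ (-s) := by ring
  have h2 : x ^ (-η) ≤ Λ ^ (-(2 * η)) := by
    have hΛ2 : (0:ℝ) < Λ ^ 2 := by positivity
    have b1 : x ^ (-η) ≤ (Λ ^ 2) ^ (-η) := rpow_neg_anti hΛ2 hsh hη0.le
    have b2 : (Λ ^ 2) ^ (-η) = Λ ^ (-(2 * η)) := by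
      rw [← Real.rpow_natCast Λ 2, ← Real.rpow_mul hΛpos.le]
      congr 1
      push_cast
      ring
    rw [← b2]; exact b1
  have h3 : x ^ (-(κ / 2)) ≤ y ^ (-(κ / 2)) := rpow_neg_anti hypos hyx (by linarith)
  have key : x⁻¹ * y⁻¹ ≤ (4 * L ^ (-s)) * (Λ ^ (-(2 * η)) * (y ^ (-(κ / 2)) * y⁻¹)) := by
    calc x⁻¹ * y⁻¹ = x ^ (-s) * (x ^ (-η) * x ^ (-(κ / 2))) * y⁻¹ := by rw [hsplit]
      _ ≤ (4 * L ^ (-s)) * (Λ ^ (-(2 * η)) * y ^ (-(κ / 2))) * y⁻¹ := by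
          apply mul_le_mul_of_nonneg_right _ (by positivity)
          apply mul_le_mul h1 _ (by positivity) (by positivity)
          exact mul_le_mul h2 h3 (by positivity) (by positivity)
      _ = (4 * L ^ (-s)) * (Λ ^ (-(2 * η)) * (y ^ (-(κ / 2)) * y⁻¹)) := by ring
  have hy' : y ^ (-(κ / 2)) * y⁻¹ = y ^ (-(1 + κ / 2)) := by
    rw [← Real.rpow_neg_one y, ← Real.rpow_add hypos]
    congr 1
    ring
  rw [one_div, mul_inv]
  calc x⁻¹ * y⁻¹ ≤ (4 * L ^ (-s)) * (Λ ^ (-(2 * η)) * (y ^ (-(κ / 2)) * y⁻¹)) := key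
    _ = Λ ^ (-(2 * η)) * (4 * L ^ (-s)) * (y ^ (-(1 + κ / 2))) := by rw [hy']; ring

/-- Pointwise kernel estimate. -/
lemma key_ineq {η κ Λ a b L : ℝ} (hη0 : 0 < η) (hη1 : η < 1)
    (hκ0 : 0 < κ) (hκ2 : κ < 2 - 2 * η) (hΛ : 1 ≤ Λ)
    (ha : 1 ≤ a) (hb : 1 ≤ b) (hL1 : 1 ≤ L) (hmax : L ≤ 2 * (a + b))
    (hsh : Λ ^ 2 ≤ a) :
    1 / (b * a) ≤ Λ ^ (-(2 * η)) * (4 * L ^ (-((2 - 2 * η - κ) / 2))) *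
      (a ^ (-(1 + κ / 2)) + b ^ (-(1 + κ / 2))) := by
  have hapos : (0:ℝ) < a := by linarith
  have hbpos : (0:ℝ) < b := by linarith
  have hcnn : 0 ≤ Λ ^ (-(2 * η)) * (4 * L ^ (-((2 - 2 * η - κ) / 2))) := by
    have h1 : (0:ℝ) ≤ Λ ^ (-(2*η)) := Real.rpow_nonneg (by linarith) _
    have h2 : (0:ℝ) ≤ L ^ (-((2 - 2 * η - κ) / 2)) := Real.rpow_nonneg (by linarith) _
    positivity
  rcases le_total a b with hab | hab
  · have h := aux_ineq hη0 hη1 hκ0 hκ2 hΛ ha hab (by linarith) hL1 (hsh.trans hab)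
    calc 1 / (b * a) ≤ Λ ^ (-(2 * η)) * (4 * L ^ (-((2 - 2 * η - κ) / 2))) *
          (a ^ (-(1 + κ / 2))) := h
      _ ≤ _ := by
          apply mul_le_mul_of_nonneg_left _ hcnn
          have : (0:ℝ) ≤ b ^ (-(1 + κ / 2)) := Real.rpow_nonneg hbpos.le _
          linarith
  · have h := aux_ineq hη0 hη1 hκ0 hκ2 hΛ hb hab (by linarith) hL1 hsh
    calc 1 / (b * a) = 1 / (a * b) := by rw [mul_comm]
      _ ≤ Λ ^ (-(2 * η)) * (4 * L ^ (-((2 - 2 * η - κ) / 2))) *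
          (b ^ (-(1 + κ / 2))) := h
      _ ≤ _ := by
          apply mul_le_mul_of_nonneg_left _ hcnn
          have : (0:ℝ) ≤ a ^ (-(1 + κ / 2)) := Real.rpow_nonneg hapos.le _
          linarith

/-- 1D summability. -/
lemma sum1d {q : ℝ} (hq : 1 / 2 < q) :
    Summable (fun n : ℤ => (1 + (n : ℝ) ^ 2) ^ (-q)) := by
  have hq0 : (0:ℝ) ≤ q := by linarith
  have hnat : Summable (fun n : ℕ => (1 + (n : ℝ) ^ 2) ^ (-q)) := by
    have hbase : Summable (fun n : ℕ => ((n : ℝ)) ^ (-(2 * q))) :=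
      Real.summable_nat_rpow.2 (by linarith)
    have hshift : Summable (fun n : ℕ => ((n : ℝ) + 1) ^ (-(2 * q))) := by
      have h := (summable_nat_add_iff (f := fun n : ℕ => ((n : ℝ)) ^ (-(2 * q))) 1).2 hbase
      refine h.congr fun n => ?_
      push_cast
      try ring
    have hsum : Summable (fun n : ℕ => (2:ℝ) ^ q * ((n : ℝ) + 1) ^ (-(2 * q))) :=
      hshift.mul_left _
    refine Summable.of_nonneg_of_le
      (fun n => Real.rpow_nonneg (by positivity) _) (fun n => ?_) hsum
    have e1 : ((n:ℝ) + 1) ^ (-(2 * q)) = (((n:ℝ) + 1) ^ 2) ^ (-q) := by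
      rw [← Real.rpow_natCast ((n:ℝ) + 1) 2, ← Real.rpow_mul (by positivity)]
      congr 1
      push_cast
      ring
    have h2 : ((n : ℝ) + 1) ^ 2 / 2 ≤ 1 + (n : ℝ) ^ 2 := by
      nlinarith [sq_nonneg ((n:ℝ) - 1)]
    have h3 : (1 + (n : ℝ) ^ 2) ^ (-q) ≤ (((n : ℝ) + 1) ^ 2 / 2) ^ (-q) :=
      rpow_neg_anti (by positivity) h2 hq0
    have h4 : (((n : ℝ) + 1) ^ 2 / 2) ^ (-q) = (2:ℝ) ^ q * (((n:ℝ) + 1) ^ 2) ^ (-q) := by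
      rw [Real.div_rpow (by positivity) (by norm_num : (0:ℝ) ≤ 2),
        Real.rpow_neg (by norm_num : (0:ℝ) ≤ 2), div_eq_mul_inv, inv_inv, mul_comm]
    rw [e1]
    calc (1 + (n : ℝ) ^ 2) ^ (-q) ≤ (((n : ℝ) + 1) ^ 2 / 2) ^ (-q) := h3
      _ = (2:ℝ) ^ q * (((n:ℝ) + 1) ^ 2) ^ (-q) := h4
  exact Summable.of_nat_of_neg
    (hnat.congr fun n => congrArg (· ^ (-q)) (by push_cast; ring))
    (hnat.congr fun n => congrArg (· ^ (-q)) (by push_cast; ring))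

/-- Weighted Hilbert-Schmidt kernel bound for the shell observables:
for `η ∈ (0,1)` and `κ ∈ (0, 2-2η)`,
`∑_{h(u) > Λ²} ((1+|u+ℓ|²)(1+|u|²))^{-1} ≤ C Λ^{-2η} (1+|ℓ|²)^{-(2-2η-κ)/2}`. -/
theorem shell_weighted_HS_bound (η κ : ℝ)
    (hη : η ∈ Set.Ioo (0 : ℝ) 1) (hκ : κ ∈ Set.Ioo (0 : ℝ) (2 - 2 * η)) :
    ∃ C : ℝ, 0 < C ∧ ∀ Λ : ℝ, 1 ≤ Λ → ∀ ℓ : ℤ × ℤ,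
      ∑' u : {u : ℤ × ℤ // Λ ^ 2 < 1 + nsq u},
        ENNReal.ofReal (1 / ((1 + nsq (u.1 + ℓ)) * (1 + nsq u.1))) ≤
      ENNReal.ofReal
        (C * Λ ^ (-(2 * η)) * (1 + nsq ℓ) ^ (-((2 - 2 * η - κ) / 2))) := by
  obtain ⟨hη0, hη1⟩ := hη
  obtain ⟨hκ0, hκ2⟩ := hκ
  set p : ℝ := 1 + κ / 2 with hp
  set q : ℝ := p / 2 with hqdef
  have hq : 1 / 2 < q := by simp only [hqdef, hp]; linarith
  set F : ℤ × ℤ → ℝ≥0∞ := fun u => ENNReal.ofReal ((1 + nsq u) ^ (-p)) with hF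
  set K : ℝ≥0∞ := ∑' u : ℤ × ℤ, F u with hKdef
  have hg : Summable (fun n : ℤ => (1 + (n : ℝ) ^ 2) ^ (-q)) := sum1d hq
  set T : ℝ≥0∞ := ∑' n : ℤ, ENNReal.ofReal ((1 + (n : ℝ) ^ 2) ^ (-q)) with hT
  have hTtop : T ≠ ⊤ := by
    rw [hT, ← ENNReal.ofReal_tsum_of_nonneg
      (fun n => Real.rpow_nonneg (by positivity) _) hg]
    exact ENNReal.ofReal_ne_top
  have hKle : K ≤ T * T := by
    have hpt : ∀ u : ℤ × ℤ, F u ≤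
        ENNReal.ofReal ((1 + (u.1 : ℝ) ^ 2) ^ (-q)) *
        ENNReal.ofReal ((1 + (u.2 : ℝ) ^ 2) ^ (-q)) := by
      intro u
      rw [← ENNReal.ofReal_mul (Real.rpow_nonneg (by positivity) _)]
      apply ENNReal.ofReal_le_ofReal
      have hA : (0:ℝ) < 1 + (u.1 : ℝ) ^ 2 := by positivity
      have hB : (0:ℝ) < 1 + (u.2 : ℝ) ^ 2 := by positivity
      have hX : (0:ℝ) < 1 + nsq u := by have := nsq_nonneg u; linarith
      have hsq : (1 + (u.1 : ℝ) ^ 2) * (1 + (u.2 : ℝ) ^ 2) ≤ (1 + nsq u) ^ 2 := by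
        unfold nsq
        nlinarith [sq_nonneg ((u.1:ℝ) * (u.2:ℝ)), sq_nonneg ((u.1:ℝ)^2 + (u.2:ℝ)^2),
          sq_nonneg (u.1:ℝ), sq_nonneg (u.2:ℝ)]
      have h1 : (1 + nsq u) ^ (-p) = ((1 + nsq u) ^ 2) ^ (-q) := by
        rw [← Real.rpow_natCast (1 + nsq u) 2, ← Real.rpow_mul hX.le]
        congr 1
        rw [hqdef]
        push_cast
        ring
      have h2 : ((1 + nsq u) ^ 2) ^ (-q) ≤
          ((1 + (u.1 : ℝ) ^ 2) * (1 + (u.2 : ℝ) ^ 2)) ^ (-q) :=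
        rpow_neg_anti (by positivity) hsq (by linarith)
      have h3 : ((1 + (u.1 : ℝ) ^ 2) * (1 + (u.2 : ℝ) ^ 2)) ^ (-q) =
          (1 + (u.1 : ℝ) ^ 2) ^ (-q) * (1 + (u.2 : ℝ) ^ 2) ^ (-q) :=
        Real.mul_rpow hA.le hB.le
      rw [h1, ← h3]
      exact h2
    calc K ≤ ∑' u : ℤ × ℤ, (ENNReal.ofReal ((1 + (u.1 : ℝ) ^ 2) ^ (-q)) *
          ENNReal.ofReal ((1 + (u.2 : ℝ) ^ 2) ^ (-q))) := ENNReal.tsum_le_tsum hpt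
      _ = ∑' (a : ℤ) (b : ℤ), (ENNReal.ofReal ((1 + (a : ℝ) ^ 2) ^ (-q)) *
          ENNReal.ofReal ((1 + (b : ℝ) ^ 2) ^ (-q))) := ENNReal.tsum_prod'
      _ = ∑' (a : ℤ), (ENNReal.ofReal ((1 + (a : ℝ) ^ 2) ^ (-q)) * T) :=
          tsum_congr fun a => ENNReal.tsum_mul_left
      _ = T * T := ENNReal.tsum_mul_right
  have hKtop : K ≠ ⊤ := by
    intro h
    rw [h] at hKle
    exact (ENNReal.mul_ne_top hTtop hTtop) (top_le_iff.mp hKle)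
  set A : ℝ := K.toReal with hA
  have hAnn : 0 ≤ A := ENNReal.toReal_nonneg
  refine ⟨8 * A + 1, by linarith, ?_⟩
  intro Λ hΛ ℓ
  have hΛpos : (0:ℝ) < Λ := by linarith
  set L : ℝ := 1 + nsq ℓ with hLdef
  have hL1 : (1:ℝ) ≤ L := by
    have := nsq_nonneg ℓ
    simp only [hLdef]
    linarith
  set s : ℝ := (2 - 2 * η - κ) / 2 with hsdef
  have hΛnn : (0:ℝ) ≤ Λ ^ (-(2 * η)) := Real.rpow_nonneg hΛpos.le _
  have hLnn : (0:ℝ) ≤ L ^ (-s) := Real.rpow_nonneg (by linarith) _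
  set c : ℝ≥0∞ := ENNReal.ofReal (Λ ^ (-(2 * η)) * (4 * L ^ (-s))) with hc
  have hstep1 : ∀ u : ℤ × ℤ, Λ ^ 2 < 1 + nsq u →
      ENNReal.ofReal (1 / ((1 + nsq (u + ℓ)) * (1 + nsq u))) ≤
      c * (F u + F (u + ℓ)) := by
    intro u hu
    have ha : (1:ℝ) ≤ 1 + nsq u := by have := nsq_nonneg u; linarith
    have hb : (1:ℝ) ≤ 1 + nsq (u + ℓ) := by have := nsq_nonneg (u + ℓ); linarith
    have hmax : L ≤ 2 * ((1 + nsq u) + (1 + nsq (u + ℓ))) := by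
      simp only [hLdef, nsq, Prod.fst_add, Prod.snd_add]
      push_cast
      nlinarith [sq_nonneg (2 * (u.1:ℝ) + (ℓ.1:ℝ)), sq_nonneg (2 * (u.2:ℝ) + (ℓ.2:ℝ))]
    have hkey := key_ineq hη0 hη1 hκ0 hκ2 hΛ ha hb hL1 hmax hu.le
    have hrw : c * (F u + F (u + ℓ)) =
        ENNReal.ofReal ((Λ ^ (-(2 * η)) * (4 * L ^ (-s))) *
          ((1 + nsq u) ^ (-p) + (1 + nsq (u + ℓ)) ^ (-p))) := by
      simp only [hc, hF]
      rw [← ENNReal.ofReal_add (Real.rpow_nonneg (by linarith : (0:ℝ) ≤ 1 + nsq u) _)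
        (Real.rpow_nonneg (by linarith : (0:ℝ) ≤ 1 + nsq (u + ℓ)) _),
        ← ENNReal.ofReal_mul (mul_nonneg hΛnn (mul_nonneg (by norm_num) hLnn))]
    rw [hrw]
    apply ENNReal.ofReal_le_ofReal
    exact hkey
  calc ∑' u : {u : ℤ × ℤ // Λ ^ 2 < 1 + nsq u},
        ENNReal.ofReal (1 / ((1 + nsq (u.1 + ℓ)) * (1 + nsq u.1)))
      ≤ ∑' u : {u : ℤ × ℤ // Λ ^ 2 < 1 + nsq u}, c * (F u.1 + F (u.1 + ℓ)) :=
        ENNReal.tsum_le_tsum fun v => hstep1 v.1 v.2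
    _ ≤ ∑' u : ℤ × ℤ, c * (F u + F (u + ℓ)) :=
        ENNReal.tsum_comp_le_tsum_of_injective Subtype.val_injective
          fun u => c * (F u + F (u + ℓ))
    _ = c * (K + K) := by
        have htrans : (∑' u : ℤ × ℤ, F (u + ℓ)) = K := by
          rw [hKdef]
          exact Equiv.tsum_eq (Equiv.addRight ℓ) F
        rw [ENNReal.tsum_mul_left, ENNReal.tsum_add, htrans, hKdef]
    _ ≤ ENNReal.ofReal ((8 * A + 1) * Λ ^ (-(2 * η)) * L ^ (-s)) := by
        have hK : K = ENNReal.ofReal A := (ENNReal.ofReal_toReal hKtop).symm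
        rw [hK, hc, ← ENNReal.ofReal_add hAnn hAnn,
          ← ENNReal.ofReal_mul (by positivity : (0:ℝ) ≤ Λ ^ (-(2 * η)) * (4 * L ^ (-s)))]
        apply ENNReal.ofReal_le_ofReal
        have hxy : (0:ℝ) ≤ Λ ^ (-(2 * η)) * L ^ (-s) := mul_nonneg hΛnn hLnn
        have e : Λ ^ (-(2 * η)) * (4 * L ^ (-s)) * (A + A) =
            8 * A * (Λ ^ (-(2 * η)) * L ^ (-s)) := by ring
        rw [e]
        calc 8 * A * (Λ ^ (-(2 * η)) * L ^ (-s))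
            ≤ (8 * A + 1) * (Λ ^ (-(2 * η)) * L ^ (-s)) :=
              mul_le_mul_of_nonneg_right (by linarith) hxy
          _ = (8 * A + 1) * Λ ^ (-(2 * η)) * L ^ (-s) := by ring
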